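/- arXiv:1103.3626 — 2 statements merged into one kernel-verified Lean document; each statement's English description precedes it below -/
import Mathlib

section
/- Under the same hypotheses (v = dm odd, a_i, b_i ∈ {-1,1}, PSD_A(s)+PSD_B(s) = 2v-2 for s = 1,...,v-1 and = 4v-2 for s = 0), one has Σ_{0≤k<l<d} (A_k A_l + B_k B_l) = v - m. -/
noncomputable def PSD (v : ℕ) (x : ℕ → ℝ) (k : ℕ) : ℝ :=
  ‖∑ α ∈ Finset.range v, (x α : ℂ)
    * Complex.exp (2 * (Real.pi : ℂ) * Complex.I * α * k / v)‖ ^ 2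

/-!
At the frequencies `s * m` the length-`v` transform of `a` collapses to the length-`d` transform
of its compression `A`, so Parseval over `s < d` turns the hypotheses into
`∑ A_k² + ∑ B_k² = 2v + 2m - 2`, while `PSD` at `0` gives `(∑ A_k)² + (∑ B_k)² = 4v - 2`.
The difference of the two is `2 ∑_{k<l} (A_k A_l + B_k B_l)`.
-/

open Finset Complex ComplexConjugate

/-- The sequence `A_k` of the paper, for `x = a`. -/
def compression {M : Type*} [AddCommMonoid M] (d m : ℕ) (x : ℕ → M) (k : ℕ) : M :=
  ∑ i ∈ range m, x (k + i * d)

lemma sum_range_compression {M : Type*} [AddCommMonoid M] (d m : ℕ) (x : ℕ → M) :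
    ∑ k ∈ range d, compression d m x k = ∑ α ∈ range (d * m), x α := by
  induction m with
  | zero => simp [compression]
  | succ m ih =>
    simp only [compression, sum_range_succ, sum_add_distrib] at ih ⊢
    rw [ih, Nat.mul_succ, sum_range_add]
    simp only [add_comm _ (m * d), mul_comm d m]

lemma two_mul_sum_range_sum_range_mul {R : Type*} [CommRing R] (d : ℕ) (c : ℕ → R) :
    2 * ∑ l ∈ range d, ∑ k ∈ range l, c k * c l
      = (∑ k ∈ range d, c k) ^ 2 - ∑ k ∈ range d, c k ^ 2 := by
  induction d with
  | zero => simp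
  | succ n ih =>
    rw [sum_range_succ, sum_range_succ, sum_range_succ, ← sum_mul, mul_add, ih]
    ring

lemma sum_range_pow_eq_zero_of_pow_eq_one {R : Type*} [Ring R] [NoZeroDivisors R] {z : R} {n : ℕ}
    (hz : z ^ n = 1) (hz1 : z ≠ 1) : ∑ s ∈ range n, z ^ s = 0 := by
  have h := geom_sum_mul z n
  rw [hz, sub_self] at h
  exact (mul_eq_zero.mp h).resolve_right (sub_ne_zero.mpr hz1)

lemma IsPrimitiveRoot.sum_range_pow_mul_mul_conj_pow_mul {ζ : ℂ} {d : ℕ} (hζ : IsPrimitiveRoot ζ d)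
    {k l : ℕ} (hk : k < d) (hl : l < d) :
    ∑ s ∈ range d, ζ ^ (k * s) * conj (ζ ^ (l * s)) = if k = l then (d : ℂ) else 0 := by
  have hnorm : ∀ j, ‖ζ ^ j‖ = 1 := fun j => by
    rw [norm_pow, hζ.norm'_eq_one (by omega), one_pow]
  have hterm : ∀ s, ζ ^ (k * s) * conj (ζ ^ (l * s)) = (ζ ^ k * (ζ ^ l)⁻¹) ^ s := fun s => by
    rw [inv_eq_conj (hnorm l), mul_pow, ← map_pow, ← pow_mul, ← pow_mul]
  simp only [hterm]
  split_ifs with hkl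
  · subst hkl
    simp [mul_inv_cancel₀ (norm_ne_zero_iff.mp ((hnorm k).trans_ne one_ne_zero))]
  · apply sum_range_pow_eq_zero_of_pow_eq_one
    · rw [mul_pow, inv_pow, ← pow_mul, ← pow_mul, mul_comm k, mul_comm l, pow_mul, pow_mul ζ d l,
        hζ.pow_eq_one, one_pow, one_pow, inv_one, mul_one]
    · rw [Ne, mul_inv_eq_one₀ (pow_ne_zero _ (hζ.ne_zero (by omega)))]
      exact fun h => hkl (hζ.pow_inj hk hl h)

theorem IsPrimitiveRoot.sum_range_norm_sum_mul_pow_sq {ζ : ℂ} {d : ℕ} (hζ : IsPrimitiveRoot ζ d)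
    (c : ℕ → ℂ) :
    ∑ s ∈ range d, ‖∑ k ∈ range d, c k * ζ ^ (k * s)‖ ^ 2 = d * ∑ k ∈ range d, ‖c k‖ ^ 2 := by
  apply ofReal_injective
  push_cast
  simp only [← mul_conj', map_sum, map_mul, sum_mul, mul_sum]
  calc ∑ s ∈ range d, ∑ l ∈ range d, ∑ k ∈ range d,
        c k * ζ ^ (k * s) * (conj (c l) * conj (ζ ^ (l * s)))
      = ∑ l ∈ range d, ∑ k ∈ range d,
          c k * conj (c l) * ∑ s ∈ range d, ζ ^ (k * s) * conj (ζ ^ (l * s)) := by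
        rw [sum_comm]
        refine sum_congr rfl fun l _ => ?_
        rw [sum_comm]
        refine sum_congr rfl fun k _ => ?_
        rw [mul_sum]
        exact sum_congr rfl fun s _ => by ring
    _ = ∑ l ∈ range d, (d : ℂ) * (c l * conj (c l)) := by
        refine sum_congr rfl fun l hl => ?_
        rw [sum_eq_single l]
        · rw [hζ.sum_range_pow_mul_mul_conj_pow_mul (mem_range.mp hl) (mem_range.mp hl), if_pos rfl]
          ring
        · intro k hk hkl
          rw [hζ.sum_range_pow_mul_mul_conj_pow_mul (mem_range.mp hk) (mem_range.mp hl),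
            if_neg hkl, mul_zero]
        · exact fun h => absurd hl h

lemma sum_range_mul_pow_mul_eq_sum_compression {R : Type*} [CommSemiring R] {ζ : R} {d m : ℕ}
    (hζ : ζ ^ (d * m) = 1) (x : ℕ → R) (s : ℕ) :
    ∑ α ∈ range (d * m), x α * ζ ^ (α * (s * m))
      = ∑ k ∈ range d, compression d m x k * (ζ ^ m) ^ (k * s) := by
  rw [← sum_range_compression]
  refine sum_congr rfl fun k _ => ?_
  unfold compression
  rw [sum_mul]
  refine sum_congr rfl fun i _ => ?_
  dsimp only
  rw [show (k + i * d) * (s * m) = m * (k * s) + d * m * (i * s) by ring, pow_add, pow_mul,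
    pow_mul ζ (d * m), hζ, one_pow, mul_one]

lemma PSD_eq_norm_sum_mul_pow_sq (v : ℕ) (x : ℕ → ℝ) (k : ℕ) :
    PSD v x k = ‖∑ α ∈ range v, (x α : ℂ) * exp (2 * Real.pi * I / v) ^ (α * k)‖ ^ 2 := by
  unfold PSD
  congr 2
  refine sum_congr rfl fun α _ => ?_
  rw [← exp_nat_mul]
  push_cast
  ring_nf

lemma PSD_zero (v : ℕ) (x : ℕ → ℝ) : PSD v x 0 = (∑ α ∈ range v, x α) ^ 2 := by
  rw [PSD_eq_norm_sum_mul_pow_sq]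
  simp only [mul_zero, pow_zero, mul_one]
  rw [← ofReal_sum, norm_real, Real.norm_eq_abs, sq_abs]

theorem sum_range_PSD_mul {d m : ℕ} (hd : d ≠ 0) (hm : m ≠ 0) (x : ℕ → ℝ) :
    ∑ s ∈ range d, PSD (d * m) x (s * m) = d * ∑ k ∈ range d, compression d m x k ^ 2 := by
  have hζ := isPrimitiveRoot_exp (d * m) (mul_ne_zero hd hm)
  have hζm : IsPrimitiveRoot (exp (2 * Real.pi * I / (d * m : ℕ)) ^ m) d := by
    simpa [hm] using hζ.pow_of_dvd hm (dvd_mul_left m d)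
  simp only [PSD_eq_norm_sum_mul_pow_sq, sum_range_mul_pow_mul_eq_sum_compression hζ.pow_eq_one,
    compression, ← ofReal_sum,
    hζm.sum_range_norm_sum_mul_pow_sq, norm_real, Real.norm_eq_abs, sq_abs]

theorem stmt5_general (v d m : ℕ) (hv0 : 0 < v) (hdm : v = d * m)
    (a b : ℕ → ℝ)
    (hpsd : ∀ s : ℕ, 1 ≤ s → s ≤ v - 1 → PSD v a s + PSD v b s = 2 * v - 2)
    (hpsd0 : PSD v a 0 + PSD v b 0 = 4 * v - 2) :
    ∑ l ∈ Finset.range d, ∑ k ∈ Finset.range l,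
        ((∑ i ∈ Finset.range m, a (k + i * d)) * (∑ i ∈ Finset.range m, a (l + i * d))
          + (∑ i ∈ Finset.range m, b (k + i * d)) * (∑ i ∈ Finset.range m, b (l + i * d)))
      = (v : ℝ) - m := by
  have hd : d ≠ 0 := left_ne_zero_of_mul (hdm ▸ hv0.ne')
  have hm : m ≠ 0 := right_ne_zero_of_mul (hdm ▸ hv0.ne')
  have hvdm : (v : ℝ) = d * m := by exact_mod_cast hdm
  have hpsd_mul : ∀ s ∈ range d, PSD v a (s * m) + PSD v b (s * m)
      = 2 * v - 2 + if s = 0 then 2 * (v : ℝ) else 0 := by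
    intro s hs
    rcases Nat.eq_zero_or_pos s with rfl | hs0
    · rw [zero_mul, hpsd0, if_pos rfl]
      ring
    · rw [if_neg hs0.ne', add_zero]
      have : (s + 1) * m ≤ d * m := Nat.mul_le_mul_right m (mem_range.mp hs)
      exact hpsd _ (Nat.mul_pos hs0 (Nat.pos_of_ne_zero hm)) (by rw [add_mul] at this; omega)
  have hsq : ∑ k ∈ range d, compression d m a k ^ 2 + ∑ k ∈ range d, compression d m b k ^ 2
      = 2 * v + 2 * m - 2 := by
    refine mul_left_cancel₀ (Nat.cast_ne_zero.mpr hd) ?_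
    rw [mul_add, ← sum_range_PSD_mul hd hm, ← sum_range_PSD_mul hd hm, ← hdm, ← sum_add_distrib,
      sum_congr rfl hpsd_mul, sum_add_distrib, sum_ite_eq',
      if_pos (mem_range.mpr (Nat.pos_of_ne_zero hd)), sum_const, card_range, nsmul_eq_mul, hvdm]
    ring
  have htot : (∑ k ∈ range d, compression d m a k) ^ 2 + (∑ k ∈ range d, compression d m b k) ^ 2
      = 4 * v - 2 := by
    rwa [sum_range_compression, sum_range_compression, ← hdm, ← PSD_zero, ← PSD_zero]
  have hA := two_mul_sum_range_sum_range_mul d (compression d m a)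
  have hB := two_mul_sum_range_sum_range_mul d (compression d m b)
  change ∑ l ∈ range d, ∑ k ∈ range l,
    (compression d m a k * compression d m a l + compression d m b k * compression d m b l) = _
  rw [sum_congr rfl fun l _ => sum_add_distrib, sum_add_distrib]
  linarith

/-- Generalized constraint: `∑_{k<l} (A_k A_l + B_k B_l) = v - m`. -/
theorem stmt5 (v d m : ℕ) (hv : Odd v) (hv0 : 0 < v) (hdm : v = d * m)
    (a b : ℕ → ℝ)
    (ha : ∀ i, a i = -1 ∨ a i = 1) (hb : ∀ i, b i = -1 ∨ b i = 1)
    (hpsd : ∀ s : ℕ, 1 ≤ s → s ≤ v - 1 → PSD v a s + PSD v b s = 2 * v - 2)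
    (hpsd0 : PSD v a 0 + PSD v b 0 = 4 * v - 2) :
    ∑ l ∈ Finset.range d, ∑ k ∈ Finset.range l,
        ((∑ i ∈ Finset.range m, a (k + i * d)) * (∑ i ∈ Finset.range m, a (l + i * d))
          + (∑ i ∈ Finset.range m, b (k + i * d)) * (∑ i ∈ Finset.range m, b (l + i * d)))
      = (v : ℝ) - m :=
  stmt5_general v d m hv0 hdm a b hpsd hpsd0
end

section
/- Under the hypotheses of the generalized constraint theorem (v = dm odd, a_i, b_i ∈ {-1,1}, PSD_A(s)+PSD_B(s) = 2v-2 for s ≠ 0 and = 4v-2 for s = 0), for each r = 1,...,d-1 one has Σ_{0≤k<l<d} (A_k A_l + B_k B_l) sin²(π(l-k)r/d) = v/2. -/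
/-!
At a frequency `s = r m` that is a multiple of `m`, the phase `e^{2πi α s / v}` depends only on
`α mod d`, so the DFT of `a` at `s` collapses to the DFT of the compressed sequence
`A_j = ∑_i a (j + i d)` at `r`:
`PSD_a(r m) = ∑_k A_k² + 2 ∑_{k<l} A_k A_l cos(2π(l-k)r/d)`.
Subtracting this from the case `r = 0` and using `1 - cos θ = 2 sin²(θ/2)` gives
`∑_{k<l} A_k A_l sin²(π(l-k)r/d) = (PSD_a(0) - PSD_a(r m)) / 4`; adding the same identity for `b`,
the hypotheses make the right-hand side `((4v - 2) - (2v - 2)) / 4 = v / 2`.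
-/

open Finset

theorem sum_range_mul_eq_sum_sum {M : Type*} [AddCommMonoid M] (d m : ℕ) (g : ℕ → M) :
    ∑ α ∈ range (d * m), g α = ∑ k ∈ range d, ∑ i ∈ range m, g (k + i * d) := by
  induction m with
  | zero => simp
  | succ m ih =>
    rw [Nat.mul_succ, sum_range_add, ih]
    simp only [sum_range_succ, sum_add_distrib, mul_comm m d, add_comm (d * m)]

theorem sum_sum_eq_sum_diag_add_sum_lt {M : Type*} [AddCommMonoid M] (d : ℕ) (f : ℕ → ℕ → M) :
    ∑ k ∈ range d, ∑ l ∈ range d, f k l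
      = ∑ l ∈ range d, f l l + ∑ l ∈ range d, ∑ k ∈ range l, (f k l + f l k) := by
  induction d with
  | zero => simp
  | succ d ih =>
    simp only [sum_range_succ, sum_add_distrib] at *
    rw [ih]
    abel

open ComplexConjugate in
theorem Complex.sq_norm_sum_ofReal_mul_exp {ι : Type*} (s : Finset ι) (X θ : ι → ℝ) :
    ‖∑ k ∈ s, (X k : ℂ) * exp (θ k * I)‖ ^ 2
      = ∑ k ∈ s, ∑ l ∈ s, X k * X l * Real.cos (θ k - θ l) := by
  have hterm : ∀ k l, ((X k : ℂ) * exp (θ k * I) * conj ((X l : ℂ) * exp (θ l * I))).re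
      = X k * X l * Real.cos (θ k - θ l) := by
    intro k l
    rw [map_mul, conj_ofReal, ← exp_conj, map_mul, conj_ofReal, conj_I, mul_mul_mul_comm,
      ← exp_add, ← ofReal_mul,
      show (θ k : ℂ) * I + θ l * -I = (θ k - θ l : ℝ) * I by push_cast; ring,
      re_ofReal_mul, exp_ofReal_mul_I_re]
  rw [Complex.sq_norm, ← ofReal_re (normSq _), ← mul_conj, map_sum, sum_mul_sum, re_sum]
  simp only [re_sum, hterm]

def compress (d m : ℕ) (x : ℕ → ℝ) (j : ℕ) : ℝ := ∑ i ∈ range m, x (j + i * d)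

theorem PSD_mul_mul_eq_sq_norm_compress (d m : ℕ) (x : ℕ → ℝ) (r : ℕ) :
    PSD (d * m) x (r * m)
      = ‖∑ k ∈ range d, (compress d m x k : ℂ)
          * Complex.exp ((2 * Real.pi * k * r / d : ℝ) * Complex.I)‖ ^ 2 := by
  rcases Nat.eq_zero_or_pos (d * m) with h | h
  · rcases Nat.mul_eq_zero.1 h with rfl | rfl <;> simp [PSD, compress]
  have hd : (d : ℂ) ≠ 0 := by exact_mod_cast (Nat.pos_of_mul_pos_right h).ne'
  have hm : (m : ℂ) ≠ 0 := by exact_mod_cast (Nat.pos_of_mul_pos_left h).ne'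
  rw [PSD, sum_range_mul_eq_sum_sum]
  congr 2
  refine sum_congr rfl fun k _ => ?_
  rw [compress, Complex.ofReal_sum, sum_mul]
  refine sum_congr rfl fun i _ => ?_
  -- the index `k + i d` adds `i r` full turns to the phase of `k`
  have harg : 2 * (Real.pi : ℂ) * Complex.I * (k + i * d : ℕ) * (r * m : ℕ) / (d * m : ℕ)
      = (2 * Real.pi * k * r / d : ℝ) * Complex.I + (i * r : ℤ) * (2 * Real.pi * Complex.I) := by
    push_cast
    field_simp
  rw [harg, Complex.exp_add, Complex.exp_int_mul_two_pi_mul_I, mul_one]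

theorem PSD_mul_mul_eq_sum_cos (d m : ℕ) (x : ℕ → ℝ) (r : ℕ) :
    PSD (d * m) x (r * m)
      = ∑ l ∈ range d, compress d m x l ^ 2
        + 2 * ∑ l ∈ range d, ∑ k ∈ range l, compress d m x k * compress d m x l
            * Real.cos (2 * Real.pi * ((l : ℝ) - k) * r / d) := by
  rw [PSD_mul_mul_eq_sq_norm_compress, Complex.sq_norm_sum_ofReal_mul_exp,
    sum_sum_eq_sum_diag_add_sum_lt, mul_sum]
  congr 1
  · simp only [sub_self, Real.cos_zero, mul_one, sq]
  refine sum_congr rfl fun l _ => ?_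
  rw [mul_sum]
  refine sum_congr rfl fun k _ => ?_
  rw [← Real.cos_neg (_ - _)]
  ring_nf

theorem sum_compress_mul_sin_sq_eq (d m : ℕ) (x : ℕ → ℝ) (r : ℕ) :
    ∑ l ∈ range d, ∑ k ∈ range l, compress d m x k * compress d m x l
        * Real.sin (Real.pi * ((l : ℝ) - k) * r / d) ^ 2
      = (PSD (d * m) x 0 - PSD (d * m) x (r * m)) / 4 := by
  have h0 := PSD_mul_mul_eq_sum_cos d m x 0
  simp only [zero_mul, Nat.cast_zero, mul_zero, zero_div, Real.cos_zero, mul_one] at h0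
  rw [h0, PSD_mul_mul_eq_sum_cos, add_sub_add_left_eq_sub, ← mul_sub, ← sum_sub_distrib, mul_sum,
    sum_div]
  refine sum_congr rfl fun l _ => ?_
  rw [← sum_sub_distrib, mul_sum, sum_div]
  refine sum_congr rfl fun k _ => ?_
  rw [Real.sin_sq_eq_half_sub, ← mul_div_assoc, ← mul_assoc, ← mul_assoc]
  ring

theorem stmt10_general (v d m : ℕ) (hv0 : 0 < v) (hdm : v = d * m)
    (a b : ℕ → ℝ)
    (hpsd : ∀ s : ℕ, 1 ≤ s → s ≤ v - 1 → PSD v a s + PSD v b s = 2 * v - 2)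
    (hpsd0 : PSD v a 0 + PSD v b 0 = 4 * v - 2)
    (r : ℕ) (hr1 : 1 ≤ r) (hr2 : r ≤ d - 1) :
    ∑ l ∈ Finset.range d, ∑ k ∈ Finset.range l,
        ((∑ i ∈ Finset.range m, a (k + i * d)) * (∑ i ∈ Finset.range m, a (l + i * d))
            + (∑ i ∈ Finset.range m, b (k + i * d)) * (∑ i ∈ Finset.range m, b (l + i * d)))
          * Real.sin (Real.pi * ((l : ℝ) - k) * r / d) ^ 2
      = (v : ℝ) / 2 := by
  subst hdm
  have hm : 0 < m := Nat.pos_of_mul_pos_left hv0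
  have hrm : r * m ≤ d * m - 1 := by
    have := Nat.mul_le_mul_right m hr2
    rw [Nat.sub_mul, one_mul] at this
    omega
  have hA := sum_compress_mul_sin_sq_eq d m a r
  have hB := sum_compress_mul_sin_sq_eq d m b r
  simp only [compress] at hA hB
  simp only [add_mul, sum_add_distrib]
  rw [hA, hB]
  linarith [hpsd (r * m) (Nat.mul_pos hr1 hm) hrm]

/-- Generalized vertical constraint:
`∑_{k<l} (A_k A_l + B_k B_l) sin²(π(l-k)r/d) = v/2` for each `r = 1, …, d-1`. -/
theorem stmt10 (v d m : ℕ) (hv : Odd v) (hv0 : 0 < v) (hdm : v = d * m)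
    (a b : ℕ → ℝ)
    (ha : ∀ i, a i = -1 ∨ a i = 1) (hb : ∀ i, b i = -1 ∨ b i = 1)
    (hpsd : ∀ s : ℕ, 1 ≤ s → s ≤ v - 1 → PSD v a s + PSD v b s = 2 * v - 2)
    (hpsd0 : PSD v a 0 + PSD v b 0 = 4 * v - 2)
    (r : ℕ) (hr1 : 1 ≤ r) (hr2 : r ≤ d - 1) :
    ∑ l ∈ Finset.range d, ∑ k ∈ Finset.range l,
        ((∑ i ∈ Finset.range m, a (k + i * d)) * (∑ i ∈ Finset.range m, a (l + i * d))
            + (∑ i ∈ Finset.range m, b (k + i * d)) * (∑ i ∈ Finset.range m, b (l + i * d)))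
          * Real.sin (Real.pi * ((l : ℝ) - k) * r / d) ^ 2
      = (v : ℝ) / 2 :=
  stmt10_general v d m hv0 hdm a b hpsd hpsd0 r hr1 hr2
end
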